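/- arXiv:1506.01600 — 7 statements merged into one kernel-verified Lean document; each statement's English description precedes it below -/
import Mathlib

section
/- Let α ∈ ℝ and let f : ℂ \ [α,∞) → ℂ satisfy f(z) = -d + (z-α)·(e + ∫_{(α,∞)} (1+t-α)/(t-z) dρ(t)) for all z in the domain, where d, e ∈ ℝ and ρ is a finite signed measure on (α,∞). Then d = -lim_{x→0⁺} f(α - x) and e = -lim_{x→+∞} (f(α - x) + d)/x. -/
open Matrix Complex MeasureTheory Filter
open scoped ComplexOrder

/-- The "imaginary part" of a complex square matrix: `Im M = (M - M*)/(2i)`. -/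
noncomputable def mIm {q : ℕ} (M : Matrix (Fin q) (Fin q) ℂ) : Matrix (Fin q) (Fin q) ℂ :=
  ((2 : ℂ) * Complex.I)⁻¹ • (M - Mᴴ)

/-- The "real part" of a complex square matrix: `Re M = (M + M*)/2`. -/
noncomputable def mRe {q : ℕ} (M : Matrix (Fin q) (Fin q) ℂ) : Matrix (Fin q) (Fin q) ℂ :=
  ((2 : ℂ))⁻¹ • (M + Mᴴ)

/-!
On the negative half-line `z = α - x`, `x > 0`, every term of the representation is real:
`f (α - x) = -d - x (e + J x)` with `J x = ∫ (1 + t - α) / (t - α + x) dρ(t)`. Since `ρ` lives on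
`(α, ∞)`, the kernels `x (1 + t - α) / (t - α + x)` (for `x ≤ 1`) and `(1 + t - α) / (t - α + x)`
(for `x ≥ 1`) are bounded by `1` and tend pointwise to `0` as `x → 0⁺`, resp. `x → ∞`, so
dominated convergence gives `x J x → 0` and `J x → 0`.
-/

open Set Topology

section KernelIntegral

variable {μ : Measure ℝ} {α : ℝ} {g : ℝ → ℝ}

lemma ae_lt_of_measure_Iic_eq_zero (h : μ (Iic α) = 0) : ∀ᵐ t ∂μ, α < t :=
  (measure_eq_zero_iff_ae_notMem.1 h).mono fun _ ht => not_le.1 ht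

lemma aestronglyMeasurable_kernel_mul (hg : Integrable g μ) (x : ℝ) :
    AEStronglyMeasurable (fun t => (1 + t - α) / (t - α + x) * g t) μ :=
  (by fun_prop : Measurable fun t : ℝ => (1 + t - α) / (t - α + x)).aestronglyMeasurable.mul
    hg.aestronglyMeasurable

lemma tendsto_mul_integral_kernel_nhdsGT_zero (hμ : ∀ᵐ t ∂μ, α < t) (hg : Integrable g μ) :
    Tendsto (fun x => x * ∫ t, (1 + t - α) / (t - α + x) * g t ∂μ) (𝓝[>] 0) (𝓝 0) := by
  simp_rw [← integral_const_mul]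
  suffices Tendsto (fun x => ∫ t, x * ((1 + t - α) / (t - α + x) * g t) ∂μ) (𝓝[>] 0)
      (𝓝 (∫ _, 0 ∂μ)) by rwa [integral_zero] at this
  refine tendsto_integral_filter_of_dominated_convergence (fun t => |g t|)
    (.of_forall fun x => (aestronglyMeasurable_kernel_mul hg x).const_mul x) ?_ hg.abs ?_
  · filter_upwards [Ioc_mem_nhdsGT zero_lt_one] with x ⟨hx0, hx1⟩
    filter_upwards [hμ] with t ht
    have hkernel : x * ((1 + t - α) / (t - α + x)) ≤ 1 := by
      rw [mul_div_assoc', div_le_one (by linarith)]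
      nlinarith
    have hnonneg : 0 ≤ x * ((1 + t - α) / (t - α + x)) :=
      mul_nonneg hx0.le (div_nonneg (by linarith) (by linarith))
    rw [← mul_assoc, norm_mul, Real.norm_of_nonneg hnonneg]
    exact mul_le_of_le_one_left (abs_nonneg _) hkernel
  · filter_upwards [hμ] with t ht
    have hcont : ContinuousAt (fun x => x * ((1 + t - α) / (t - α + x) * g t)) 0 := by
      have : t - α + 0 ≠ 0 := by linarith
      fun_prop (disch := assumption)
    simpa using hcont.tendsto.mono_left nhdsWithin_le_nhds

lemma tendsto_integral_kernel_atTop (hμ : ∀ᵐ t ∂μ, α < t) (hg : Integrable g μ) :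
    Tendsto (fun x => ∫ t, (1 + t - α) / (t - α + x) * g t ∂μ) atTop (𝓝 0) := by
  rw [← integral_zero ℝ ℝ (μ := μ)]
  refine tendsto_integral_filter_of_dominated_convergence (fun t => |g t|)
    (.of_forall (aestronglyMeasurable_kernel_mul hg)) ?_ hg.abs ?_
  · filter_upwards [eventually_ge_atTop 1] with x hx
    filter_upwards [hμ] with t ht
    have hkernel : (1 + t - α) / (t - α + x) ≤ 1 := by
      rw [div_le_one (by linarith)]
      linarith
    rw [norm_mul, Real.norm_of_nonneg (div_nonneg (by linarith) (by linarith))]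
    exact mul_le_of_le_one_left (abs_nonneg _) hkernel
  · filter_upwards with t
    simpa using (tendsto_const_nhds.div_atTop
      (tendsto_atTop_add_const_left _ (t - α) tendsto_id)).mul_const (g t)

end KernelIntegral

lemma integral_kernel_at_sub_ofReal (μ : Measure ℝ) (α x : ℝ) (g : ℝ → ℝ) :
    ∫ t, ((1 + t - α : ℝ) : ℂ) / ((t : ℂ) - ((α : ℂ) - (x : ℂ))) * (g t : ℂ) ∂μ
      = ((∫ t, (1 + t - α) / (t - α + x) * g t ∂μ : ℝ) : ℂ) := by
  rw [← integral_complex_ofReal]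
  congr 1 with t
  push_cast
  ring_nf

theorem stmt3_general (α d e : ℝ)
    (τ : Measure ℝ) (hτ : τ (Set.Iic α) = 0)
    (ρd : ℝ → ℝ) (hρint : Integrable ρd τ)
    (f : ℂ → ℂ)
    (hf : ∀ z : ℂ, (∀ t : ℝ, α ≤ t → z ≠ (t : ℂ)) →
      f z = -(d : ℂ) + (z - (α : ℂ)) *
        ((e : ℂ) + ∫ t, ((1 + t - α : ℝ) : ℂ) / ((t : ℂ) - z) * (ρd t : ℂ) ∂τ)) :
    Tendsto (fun x : ℝ => f ((α : ℂ) - (x : ℂ))) (nhdsWithin 0 (Set.Ioi 0))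
      (nhds (-(d : ℂ)))
    ∧ Tendsto (fun x : ℝ => (f ((α : ℂ) - (x : ℂ)) + (d : ℂ)) / (x : ℂ)) atTop
      (nhds (-(e : ℂ))) := by
  have hval : ∀ x : ℝ, 0 < x → f ((α : ℂ) - (x : ℂ)) =
      ((-d - x * e - x * ∫ t, (1 + t - α) / (t - α + x) * ρd t ∂τ : ℝ) : ℂ) := by
    intro x hx
    have hoff : ∀ t : ℝ, α ≤ t → (α : ℂ) - (x : ℂ) ≠ (t : ℂ) := by
      intro t ht
      exact_mod_cast (by linarith : α - x ≠ t)
    rw [hf _ hoff, integral_kernel_at_sub_ofReal]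
    push_cast
    ring
  have hτα := ae_lt_of_measure_Iic_eq_zero hτ
  constructor
  · have hlim := ((tendsto_nhdsWithin_of_tendsto_nhds tendsto_id).mul_const e).const_sub (-d)
      |>.sub (tendsto_mul_integral_kernel_nhdsGT_zero hτα hρint)
    rw [← ofReal_neg]
    refine (tendsto_ofReal_iff.2 (by simpa using hlim)).congr' ?_
    filter_upwards [self_mem_nhdsWithin] with x hx
    exact (hval x hx).symm
  · have hlim := ((tendsto_integral_kernel_atTop hτα hρint).const_add e).neg
    rw [← ofReal_neg]
    refine (tendsto_ofReal_iff.2 (by simpa using hlim)).congr' ?_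
    filter_upwards [eventually_gt_atTop 0] with x hx
    rw [hval x hx]
    have hx0 : (x : ℂ) ≠ 0 := ofReal_ne_zero.2 hx.ne'
    rw [eq_div_iff hx0]
    push_cast
    ring

theorem stmt3 (α d e : ℝ)
    (τ : Measure ℝ) [IsFiniteMeasure τ] (hτ : τ (Set.Iic α) = 0)
    (ρd : ℝ → ℝ) (hρmeas : Measurable ρd) (hρint : Integrable ρd τ)
    (f : ℂ → ℂ)
    (hf : ∀ z : ℂ, (∀ t : ℝ, α ≤ t → z ≠ (t : ℂ)) →
      f z = -(d : ℂ) + (z - (α : ℂ)) *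
        ((e : ℂ) + ∫ t, ((1 + t - α : ℝ) : ℂ) / ((t : ℂ) - z) * (ρd t : ℂ) ∂τ)) :
    Tendsto (fun x : ℝ => f ((α : ℂ) - (x : ℂ))) (nhdsWithin 0 (Set.Ioi 0))
      (nhds (-(d : ℂ)))
    ∧ Tendsto (fun x : ℝ => (f ((α : ℂ) - (x : ℂ)) + (d : ℂ)) / (x : ℂ)) atTop
      (nhds (-(e : ℂ))) :=
  stmt3_general α d e τ hτ ρd hρint f hf
end

section
/- Let Ω be a nonempty closed subset of ℝ, let σ be a finite positive semidefinite q×q matrix measure on Ω, and define S(w) = ∫_Ω 1/(t-w) dσ(t) for w ∈ ℂ \ Ω. Then for every z ∈ ℂ \ [inf Ω, sup Ω], the column space (range) of S(z) equals the column space of the matrix σ(Ω); in particular rank S(z) = rank σ(Ω). -/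
/-!
For `z` off `[inf Ω, sup Ω]` some rotation `c ≠ 0` makes `Re (c / (t - z)) > 0` on `Ω`.
Hence `v* (c S(z)) v = ∫ c / (t - z) · v* dσ(t) v` vanishes only if `dσ(t) v = 0` for σ-almost
every `t`, which is also what `σ(Ω) v = 0` amounts to; so `ker S(z) = ker σ(Ω)` for every such
`z`. Since `S(z)* = S(z̄)` and `σ(Ω)` is Hermitian, the ranges of `S(z)` and `σ(Ω)` are the
orthogonal complements of one and the same kernel.
-/

open Matrix Complex MeasureTheory Filter
open scoped ComplexOrder ComplexConjugate

namespace Matrix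

section Range

variable {𝕜 m n : Type*} [RCLike 𝕜] [Fintype n] [DecidableEq n]

theorem mem_range_mulVecLin_iff (M : Matrix m n 𝕜) (v : m → 𝕜) :
    v ∈ LinearMap.range M.mulVecLin ↔ WithLp.toLp 2 v ∈ LinearMap.range M.toEuclideanLin := by
  simp only [LinearMap.mem_range, mulVecLin_apply, toLpLin_apply]
  exact ⟨fun ⟨y, hy⟩ => ⟨WithLp.toLp 2 y, congrArg (WithLp.toLp 2) hy⟩,
    fun ⟨y, hy⟩ => ⟨WithLp.ofLp y, congrArg WithLp.ofLp hy⟩⟩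

theorem ker_toEuclideanLin_eq_of_ker_mulVecLin_eq {M N : Matrix m n 𝕜}
    (h : LinearMap.ker M.mulVecLin = LinearMap.ker N.mulVecLin) :
    LinearMap.ker M.toEuclideanLin = LinearMap.ker N.toEuclideanLin := by
  ext x
  simpa [toLpLin_apply] using SetLike.ext_iff.mp h (WithLp.ofLp x)

variable [Fintype m] [DecidableEq m]

theorem range_toEuclideanLin_eq_orthogonal_ker (M : Matrix m n 𝕜) :
    LinearMap.range M.toEuclideanLin = (LinearMap.ker Mᴴ.toEuclideanLin)ᗮ := by
  rw [LinearMap.orthogonal_ker, ← toEuclideanLin_conjTranspose_eq_adjoint,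
    conjTranspose_conjTranspose]

theorem range_mulVecLin_eq_of_ker_conjTranspose_eq {M N : Matrix m n 𝕜}
    (h : LinearMap.ker Mᴴ.mulVecLin = LinearMap.ker Nᴴ.mulVecLin) :
    LinearMap.range M.mulVecLin = LinearMap.range N.mulVecLin := by
  ext v
  rw [mem_range_mulVecLin_iff, mem_range_mulVecLin_iff, range_toEuclideanLin_eq_orthogonal_ker,
    range_toEuclideanLin_eq_orthogonal_ker, ker_toEuclideanLin_eq_of_ker_mulVecLin_eq h]

end Range

section Integral

variable {α 𝕜 m n : Type*} [RCLike 𝕜] [MeasurableSpace α] {μ : Measure α}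

theorem of_integral_mulVec [Fintype n] {f : α → Matrix m n 𝕜}
    (hf : ∀ i j, Integrable (fun t => f t i j) μ) (v : n → 𝕜) :
    (of fun i j => ∫ t, f t i j ∂μ) *ᵥ v = fun i => ∫ t, (f t *ᵥ v) i ∂μ := by
  funext i
  simp only [mulVec, dotProduct, of_apply]
  rw [integral_finsetSum _ fun j _ => (hf i j).mul_const _]
  simp only [integral_mul_const]

theorem integrable_mulVec_apply [Fintype n] {f : α → Matrix m n 𝕜}
    (hf : ∀ i j, Integrable (fun t => f t i j) μ) (v : n → 𝕜) (i : m) :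
    Integrable (fun t => (f t *ᵥ v) i) μ :=
  integrable_finsetSum _ fun j _ => (hf i j).mul_const _

theorem integrable_dotProduct_mulVec [Fintype n] {f : α → Matrix n n 𝕜}
    (hf : ∀ i j, Integrable (fun t => f t i j) μ) (v : n → 𝕜) :
    Integrable (fun t => star v ⬝ᵥ (f t *ᵥ v)) μ :=
  integrable_finsetSum _ fun i _ => (integrable_mulVec_apply hf v i).const_mul _

theorem dotProduct_of_integral_mulVec [Fintype n] {f : α → Matrix n n 𝕜}
    (hf : ∀ i j, Integrable (fun t => f t i j) μ) (v : n → 𝕜) :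
    star v ⬝ᵥ ((of fun i j => ∫ t, f t i j ∂μ) *ᵥ v) = ∫ t, star v ⬝ᵥ (f t *ᵥ v) ∂μ := by
  simp only [of_integral_mulVec hf, dotProduct, ← integral_const_mul]
  exact (integral_finsetSum _ fun i _ => (integrable_mulVec_apply hf v i).const_mul _).symm

theorem conjTranspose_of_integral (f : α → Matrix m n 𝕜) :
    (of fun i j => ∫ t, f t i j ∂μ)ᴴ = of fun i j => ∫ t, (f t)ᴴ i j ∂μ := by
  ext i j
  simp only [conjTranspose_apply, of_apply, RCLike.star_def, integral_conj]

end Integral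

end Matrix

section WeightedKernel

variable {α 𝕜 n : Type*} [RCLike 𝕜] [MeasurableSpace α] {μ : Measure α}

theorem ae_eq_zero_of_integral_mul_eq_zero {φ g : α → 𝕜} (hφ : ∀ᵐ t ∂μ, 0 < RCLike.re (φ t))
    (hg : ∀ᵐ t ∂μ, 0 ≤ g t) (hint : Integrable (fun t => φ t * g t) μ)
    (h : ∫ t, φ t * g t ∂μ = 0) : ∀ᵐ t ∂μ, g t = 0 := by
  have hre : ∀ᵐ t ∂μ, RCLike.re (φ t * g t) = RCLike.re (φ t) * RCLike.re (g t) := by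
    filter_upwards [hg] with t ht
    simp [RCLike.mul_re, (RCLike.nonneg_iff.mp ht).2]
  have hnonneg : 0 ≤ᵐ[μ] fun t => RCLike.re (φ t * g t) := by
    filter_upwards [hre, hφ, hg] with t ht hφt hgt
    rw [ht]
    exact mul_nonneg hφt.le (RCLike.nonneg_iff.mp hgt).1
  have hzero := (integral_eq_zero_iff_of_nonneg_ae hnonneg hint.re).mp
    (by rw [integral_re hint, h, map_zero])
  filter_upwards [hzero, hre, hφ, hg] with t ht hret hφt hgt
  rw [Pi.zero_apply, hret] at ht
  have hgre : RCLike.re (g t) = 0 := (mul_eq_zero.mp ht).resolve_left hφt.ne'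
  exact RCLike.ext (by simpa using hgre) (by simpa using (RCLike.nonneg_iff.mp hgt).2)

variable [Fintype n] {d : α → Matrix n n 𝕜}

theorem mulVec_of_integral_mul_eq_zero_iff {φ : α → 𝕜} (hφ : ∀ᵐ t ∂μ, 0 < RCLike.re (φ t))
    (hd : ∀ᵐ t ∂μ, (d t).PosSemidef) (hint : ∀ i j, Integrable (fun t => φ t * d t i j) μ)
    (v : n → 𝕜) :
    (of fun i j => ∫ t, φ t * d t i j ∂μ) *ᵥ v = 0 ↔ ∀ᵐ t ∂μ, d t *ᵥ v = 0 := by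
  have hint' : ∀ i j, Integrable (fun t => (φ t • d t) i j) μ := hint
  constructor
  · intro h
    have hquad : ∫ t, φ t * (star v ⬝ᵥ (d t *ᵥ v)) ∂μ = 0 := by
      have := dotProduct_of_integral_mulVec hint' v
      simp only [smul_mulVec, dotProduct_smul, smul_eq_mul] at this
      rw [← this]
      show star v ⬝ᵥ ((of fun i j => ∫ t, φ t * d t i j ∂μ) *ᵥ v) = 0
      rw [h, dotProduct_zero]
    have hint_quad : Integrable (fun t => φ t * (star v ⬝ᵥ (d t *ᵥ v))) μ := by
      simpa only [smul_mulVec, dotProduct_smul, smul_eq_mul] using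
        integrable_dotProduct_mulVec hint' v
    filter_upwards [ae_eq_zero_of_integral_mul_eq_zero hφ
      (hd.mono fun t ht => ht.dotProduct_mulVec_nonneg v) hint_quad hquad, hd] with t ht hdt
    exact (hdt.dotProduct_mulVec_zero_iff v).mp ht
  · intro h
    refine (of_integral_mulVec hint' v).trans (funext fun i => ?_)
    refine integral_eq_zero_of_ae ?_
    filter_upwards [h] with t ht
    simp [smul_mulVec, ht]

theorem mulVec_of_integral_eq_zero_iff (hd : ∀ᵐ t ∂μ, (d t).PosSemidef)
    (hint : ∀ i j, Integrable (fun t => d t i j) μ) (v : n → 𝕜) :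
    (of fun i j => ∫ t, d t i j ∂μ) *ᵥ v = 0 ↔ ∀ᵐ t ∂μ, d t *ᵥ v = 0 := by
  simpa only [one_mul] using mulVec_of_integral_mul_eq_zero_iff (φ := fun _ => 1)
    (ae_of_all _ fun _ => by simp) hd (by simpa only [one_mul] using hint) v

theorem mulVec_of_integral_mul_eq_zero_iff_of_re_mul_pos {φ : α → 𝕜} {c : 𝕜} (hc : c ≠ 0)
    (hφ : ∀ᵐ t ∂μ, 0 < RCLike.re (c * φ t)) (hd : ∀ᵐ t ∂μ, (d t).PosSemidef)
    (hint : ∀ i j, Integrable (fun t => φ t * d t i j) μ) (v : n → 𝕜) :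
    (of fun i j => ∫ t, φ t * d t i j ∂μ) *ᵥ v = 0 ↔ ∀ᵐ t ∂μ, d t *ᵥ v = 0 := by
  have hint' : ∀ i j, Integrable (fun t => c * φ t * d t i j) μ := fun i j => by
    simpa only [mul_assoc] using (hint i j).const_mul c
  have hsmul : (of fun i j => ∫ t, c * φ t * d t i j ∂μ) =
      c • of fun i j => ∫ t, φ t * d t i j ∂μ := by
    ext i j
    simp only [of_apply, Matrix.smul_apply, smul_eq_mul, mul_assoc, integral_const_mul]
  rw [← mulVec_of_integral_mul_eq_zero_iff hφ hd hint' v, hsmul, smul_mulVec,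
    smul_eq_zero_iff_right hc]

end WeightedKernel

theorem Complex.re_mul_inv_pos_of_re_mul_conj_pos {c w : ℂ} (h : 0 < (c * conj w).re) :
    0 < (c * w⁻¹).re := by
  have hw : w ≠ 0 := by rintro rfl; simp at h
  rw [inv_def, ← mul_assoc, re_mul_ofReal]
  exact mul_pos h (inv_pos.mpr (normSq_pos.mpr hw))

theorem IsClosed.exists_norm_inv_sub_le {𝕜 : Type*} [NormedField 𝕜] {s : Set 𝕜} (hs : IsClosed s)
    {z : 𝕜} (hz : z ∉ s) : ∃ C, ∀ w ∈ s, ‖(w - z)⁻¹‖ ≤ C := by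
  obtain ⟨ε, hε, hball⟩ := Metric.isOpen_iff.mp hs.isOpen_compl z hz
  refine ⟨ε⁻¹, fun w hw => ?_⟩
  have hεw : ε ≤ ‖w - z‖ := by
    by_contra! hlt
    exact hball (by rwa [Metric.mem_ball, dist_eq_norm]) hw
  rw [norm_inv]
  exact inv_anti₀ hε hεw

/-- For closed `Ω`, this says `z ∈ ℂ \ [inf Ω, sup Ω]`. -/
def OutsideHull (Ω : Set ℝ) (z : ℂ) : Prop :=
  z.im ≠ 0 ∨ (∀ t ∈ Ω, z.re < t) ∨ (∀ t ∈ Ω, t < z.re)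

namespace OutsideHull

variable {Ω : Set ℝ} {z : ℂ}

theorem map_conj (hz : OutsideHull Ω z) : OutsideHull Ω (conj z) := by
  simpa only [OutsideHull, conj_re, conj_im, ne_eq, neg_eq_zero] using hz

theorem notMem_image (hz : OutsideHull Ω z) : z ∉ (fun t : ℝ => (t : ℂ)) '' Ω := by
  rintro ⟨t, ht, rfl⟩
  rcases hz with him | hlt | hgt
  · exact him (ofReal_im t)
  · exact (hlt t ht).ne (ofReal_re t)
  · exact (hgt t ht).ne' (ofReal_re t)

theorem exists_re_mul_inv_sub_pos (hz : OutsideHull Ω z) :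
    ∃ c : ℂ, c ≠ 0 ∧ ∀ t ∈ Ω, 0 < (c * ((t : ℂ) - z)⁻¹).re := by
  suffices ∃ c : ℂ, c ≠ 0 ∧ ∀ t ∈ Ω, 0 < (c * conj ((t : ℂ) - z)).re by
    obtain ⟨c, hc, hpos⟩ := this
    exact ⟨c, hc, fun t ht => re_mul_inv_pos_of_re_mul_conj_pos (hpos t ht)⟩
  rcases hz with him | hlt | hgt
  · rcases him.lt_or_gt with hneg | hpos
    · exact ⟨I, I_ne_zero, fun t _ => by simpa using hneg⟩
    · exact ⟨-I, neg_ne_zero.mpr I_ne_zero, fun t _ => by simpa using hpos⟩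
  · exact ⟨1, one_ne_zero, fun t ht => by simpa using hlt t ht⟩
  · exact ⟨-1, neg_ne_zero.mpr one_ne_zero, fun t ht => by simpa using hgt t ht⟩

end OutsideHull

section Stieltjes

variable {n : Type*} {Ω : Set ℝ} {τ : Measure ℝ} {d : ℝ → Matrix n n ℂ}

theorem mulVec_stieltjes_eq_zero_iff [Fintype n] (hΩ : IsClosed Ω) (hτ : τ Ωᶜ = 0)
    (hd : ∀ᵐ t ∂τ, (d t).PosSemidef) (hint : ∀ i j, Integrable (fun t => d t i j) τ) {z : ℂ}
    (hz : OutsideHull Ω z) (v : n → ℂ) :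
    (of fun i j => ∫ t, ((t : ℂ) - z)⁻¹ * d t i j ∂τ) *ᵥ v = 0 ↔ ∀ᵐ t ∂τ, d t *ᵥ v = 0 := by
  have hΩae : ∀ᵐ t ∂τ, t ∈ Ω := ae_iff.mpr hτ
  obtain ⟨c, hc, hpos⟩ := hz.exists_re_mul_inv_sub_pos
  obtain ⟨C, hC⟩ := (isometry_ofReal.isClosedEmbedding.isClosedMap Ω hΩ).exists_norm_inv_sub_le
    hz.notMem_image
  refine mulVec_of_integral_mul_eq_zero_iff_of_re_mul_pos hc (hΩae.mono hpos) hd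
    (fun i j => (hint i j).bdd_mul (by fun_prop) (hΩae.mono fun t ht => hC _ ⟨t, ht, rfl⟩)) v

theorem conjTranspose_stieltjes (hd : ∀ t, (d t).IsHermitian) (z : ℂ) :
    (of fun i j => ∫ t, ((t : ℂ) - z)⁻¹ * d t i j ∂τ)ᴴ =
      of fun i j => ∫ t, ((t : ℂ) - conj z)⁻¹ * d t i j ∂τ := by
  refine (conjTranspose_of_integral fun t : ℝ => ((t : ℂ) - z)⁻¹ • d t).trans ?_
  ext i j
  simp only [conjTranspose_smul, (hd _).eq]
  simp

end Stieltjes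

theorem stmt5_general {q : ℕ} (Ω : Set ℝ) (hΩc : IsClosed Ω)
    (τ : Measure ℝ) (hτ : τ Ωᶜ = 0)
    (d : ℝ → Matrix (Fin q) (Fin q) ℂ)
    (hdpsd : ∀ t, (d t).PosSemidef)
    (hdint : ∀ j k, Integrable (fun t => d t j k) τ)
    (S : ℂ → Matrix (Fin q) (Fin q) ℂ)
    (hS : ∀ w : ℂ, w ∉ (fun t : ℝ => (t : ℂ)) '' Ω →
      S w = Matrix.of fun j k => ∫ t, ((t : ℂ) - w)⁻¹ * d t j k ∂τ) :
    ∀ z : ℂ, (z.im ≠ 0 ∨ (∀ t ∈ Ω, z.re < t) ∨ (∀ t ∈ Ω, t < z.re)) →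
      LinearMap.range (S z).mulVecLin =
        LinearMap.range (Matrix.of fun j k => ∫ t, d t j k ∂τ).mulVecLin
      ∧ (S z).rank = (Matrix.of fun j k => ∫ t, d t j k ∂τ : Matrix (Fin q) (Fin q) ℂ).rank := by
  intro z hz
  change OutsideHull Ω z at hz
  set σ : Matrix (Fin q) (Fin q) ℂ := of fun j k => ∫ t, d t j k ∂τ
  have hσ : σᴴ = σ := by
    simp only [σ, conjTranspose_of_integral, (hdpsd _).1.eq]
  have hSz : (S z)ᴴ = S (conj z) := by
    rw [hS z hz.notMem_image, hS _ hz.map_conj.notMem_image,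
      conjTranspose_stieltjes fun t => (hdpsd t).1]
  have hker : LinearMap.ker (S z)ᴴ.mulVecLin = LinearMap.ker σᴴ.mulVecLin := by
    ext v
    have hdpsd_ae : ∀ᵐ t ∂τ, (d t).PosSemidef := ae_of_all _ hdpsd
    rw [hSz, hσ, hS _ hz.map_conj.notMem_image, LinearMap.mem_ker, LinearMap.mem_ker,
      mulVecLin_apply, mulVecLin_apply,
      mulVec_stieltjes_eq_zero_iff hΩc hτ hdpsd_ae hdint hz.map_conj,
      mulVec_of_integral_eq_zero_iff hdpsd_ae hdint]
  have hrange := range_mulVecLin_eq_of_ker_conjTranspose_eq hker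
  exact ⟨hrange, by rw [Matrix.rank, Matrix.rank, hrange]⟩

theorem stmt5 {q : ℕ} (Ω : Set ℝ) (hΩc : IsClosed Ω) (hΩne : Ω.Nonempty)
    (τ : Measure ℝ) [IsFiniteMeasure τ] (hτ : τ Ωᶜ = 0)
    (d : ℝ → Matrix (Fin q) (Fin q) ℂ)
    (hdmeas : ∀ j k : Fin q, Measurable fun t => d t j k)
    (hdpsd : ∀ t, (d t).PosSemidef)
    (hdint : ∀ j k, Integrable (fun t => d t j k) τ)
    (S : ℂ → Matrix (Fin q) (Fin q) ℂ)
    (hS : ∀ w : ℂ, w ∉ (fun t : ℝ => (t : ℂ)) '' Ω →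
      S w = Matrix.of fun j k => ∫ t, ((t : ℂ) - w)⁻¹ * d t j k ∂τ) :
    ∀ z : ℂ, (z.im ≠ 0 ∨ (∀ t ∈ Ω, z.re < t) ∨ (∀ t ∈ Ω, t < z.re)) →
      LinearMap.range (S z).mulVecLin =
        LinearMap.range (Matrix.of fun j k => ∫ t, d t j k ∂τ).mulVecLin
      ∧ (S z).rank = (Matrix.of fun j k => ∫ t, d t j k ∂τ : Matrix (Fin q) (Fin q) ℂ).rank :=
  stmt5_general Ω hΩc τ hτ d hdpsd hdint S hS
end

section
/- Let (Ω, 𝔄) be a measurable space, σ a finite positive semidefinite q×q matrix measure with trace measure τ := tr σ, and f ∈ L¹(σ) a complex-valued measurable function with f(ω) ∈ (0,∞) for τ-almost all ω. Then the column space of ∫_Ω f dσ equals the column space of σ(Ω), and the null space of ∫_Ω f dσ equals the null space of σ(Ω). -/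
open Matrix Complex MeasureTheory Filter
open scoped ComplexOrder

lemma Matrix.IsHermitian.mem_range_mulVecLin_iff {n 𝕜 : Type*} [Fintype n] [DecidableEq n]
    [RCLike 𝕜] {M : Matrix n n 𝕜} (hM : M.IsHermitian) (y : n → 𝕜) :
    y ∈ LinearMap.range M.mulVecLin ↔ ∀ x ∈ LinearMap.ker M.mulVecLin, star x ⬝ᵥ y = 0 := by
  have hrange : LinearMap.range M.toEuclideanLin = (LinearMap.ker M.toEuclideanLin)ᗮ := by
    rw [← (isSymmetric_toEuclideanLin_iff.mpr hM).orthogonal_range,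
      Submodule.orthogonal_orthogonal]
  have := congrArg (WithLp.toLp 2 y ∈ ·) hrange
  simp only [LinearMap.mem_range, Submodule.mem_orthogonal, LinearMap.mem_ker, eq_iff_iff,
    toLpLin_apply, (WithLp.toLp_injective 2).eq_iff, WithLp.ofLp_zero,
    EuclideanSpace.inner_eq_star_dotProduct, (WithLp.toLp_surjective 2).exists,
    (WithLp.toLp_surjective 2).forall] at this
  simpa only [LinearMap.mem_range, LinearMap.mem_ker, mulVecLin_apply, dotProduct_comm y]
    using this

lemma Matrix.IsHermitian.range_mulVecLin_eq_of_ker_eq {n 𝕜 : Type*} [Fintype n] [DecidableEq n]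
    [RCLike 𝕜] {M N : Matrix n n 𝕜} (hM : M.IsHermitian) (hN : N.IsHermitian)
    (h : LinearMap.ker M.mulVecLin = LinearMap.ker N.mulVecLin) :
    LinearMap.range M.mulVecLin = LinearMap.range N.mulVecLin := by
  ext y
  rw [hM.mem_range_mulVecLin_iff, hN.mem_range_mulVecLin_iff, h]

section Integral

variable {Ω n 𝕜 : Type*} [MeasurableSpace Ω] {μ : Measure Ω} [RCLike 𝕜]

lemma RCLike.integral_eq_zero_iff_of_nonneg_ae {h : Ω → 𝕜} (hnn : ∀ᵐ ω ∂μ, 0 ≤ h ω)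
    (hi : Integrable h μ) : ∫ ω, h ω ∂μ = 0 ↔ h =ᵐ[μ] 0 := by
  have hre : h =ᵐ[μ] fun ω => ((RCLike.re (h ω) : ℝ) : 𝕜) :=
    hnn.mono fun ω hω => (RCLike.conj_eq_iff_re.mp
      (RCLike.conj_eq_iff_im.mpr (RCLike.nonneg_iff.mp hω).2)).symm
  rw [integral_congr_ae hre, integral_ofReal, RCLike.ofReal_eq_zero,
    MeasureTheory.integral_eq_zero_iff_of_nonneg_ae
      (hnn.mono fun ω hω => (RCLike.nonneg_iff.mp hω).1) hi.re]
  constructor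
  · intro h0
    filter_upwards [hre, h0] with ω h1 h2
    rw [h1, h2, Pi.zero_apply, RCLike.ofReal_zero, Pi.zero_apply]
  · intro h0
    filter_upwards [h0] with ω h1
    simp [h1]

lemma isHermitian_integral {m : Ω → Matrix n n 𝕜} (hherm : ∀ᵐ ω ∂μ, (m ω).IsHermitian) :
    (of fun i j => ∫ ω, m ω i j ∂μ).IsHermitian := by
  ext i j
  simp only [conjTranspose_apply, of_apply, RCLike.star_def, ← integral_conj]
  refine integral_congr_ae ?_
  filter_upwards [hherm] with ω hω
  simpa using congrFun (congrFun hω i) j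

variable [Fintype n] {m : Ω → Matrix n n 𝕜}

lemma integrable_dotProduct_mulVec (hm : ∀ i j, Integrable (fun ω => m ω i j) μ)
    (x y : n → 𝕜) : Integrable (fun ω => x ⬝ᵥ m ω *ᵥ y) μ := by
  simp only [dotProduct, mulVec, Finset.mul_sum]
  exact integrable_finsetSum _ fun i _ => integrable_finsetSum _ fun j _ =>
    ((hm i j).mul_const _).const_mul _

lemma dotProduct_mulVec_integral (hm : ∀ i j, Integrable (fun ω => m ω i j) μ) (x y : n → 𝕜) :
    x ⬝ᵥ (of fun i j => ∫ ω, m ω i j ∂μ) *ᵥ y = ∫ ω, x ⬝ᵥ m ω *ᵥ y ∂μ := by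
  simp only [dotProduct, mulVec, of_apply, Finset.mul_sum]
  rw [integral_finsetSum _ fun i _ => integrable_finsetSum _ fun j _ =>
    ((hm i j).mul_const _).const_mul _]
  refine Finset.sum_congr rfl fun i _ => ?_
  rw [integral_finsetSum _ fun j _ => ((hm i j).mul_const _).const_mul _]
  simp only [integral_const_mul, integral_mul_const]

lemma posSemidef_integral (hm : ∀ i j, Integrable (fun ω => m ω i j) μ)
    (hpsd : ∀ᵐ ω ∂μ, (m ω).PosSemidef) : (of fun i j => ∫ ω, m ω i j ∂μ).PosSemidef := by
  refine .of_dotProduct_mulVec_nonneg (isHermitian_integral (hpsd.mono fun ω hω => hω.1))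
    fun x => ?_
  rw [dotProduct_mulVec_integral hm]
  exact integral_nonneg_of_ae (hpsd.mono fun ω hω => hω.dotProduct_mulVec_nonneg x)

lemma mulVec_integral_eq_zero_iff (hm : ∀ i j, Integrable (fun ω => m ω i j) μ)
    (hpsd : ∀ᵐ ω ∂μ, (m ω).PosSemidef) (x : n → 𝕜) :
    (of fun i j => ∫ ω, m ω i j ∂μ) *ᵥ x = 0 ↔ ∀ᵐ ω ∂μ, star x ⬝ᵥ m ω *ᵥ x = 0 := by
  rw [← (posSemidef_integral hm hpsd).dotProduct_mulVec_zero_iff, dotProduct_mulVec_integral hm,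
    RCLike.integral_eq_zero_iff_of_nonneg_ae
      (hpsd.mono fun ω hω => hω.dotProduct_mulVec_nonneg x) (integrable_dotProduct_mulVec hm _ _)]
  rfl

lemma ae_or_eq_zero_of_ae_withDensity_trace (hm : ∀ i j, Integrable (fun ω => m ω i j) μ)
    (hpsd : ∀ᵐ ω ∂μ, (m ω).PosSemidef) {p : Ω → Prop}
    (hp : ∀ᵐ ω ∂(μ.withDensity fun ω => ENNReal.ofReal (RCLike.re (m ω).trace)), p ω) :
    ∀ᵐ ω ∂μ, p ω ∨ m ω = 0 := by
  have htrace : AEMeasurable (fun ω => ENNReal.ofReal (RCLike.re (m ω).trace)) μ :=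
    ENNReal.measurable_ofReal.comp_aemeasurable
      (integrable_finsetSum _ fun i _ => hm i i).re.aemeasurable
  filter_upwards [(ae_withDensity_iff' htrace).mp hp, hpsd] with ω hω hωpsd
  by_cases hzero : ENNReal.ofReal (RCLike.re (m ω).trace) = 0
  · have htrace_nonpos : (m ω).trace ≤ 0 := RCLike.le_iff_re_im.mpr
      ⟨by simpa using hzero, by simp [(RCLike.nonneg_iff.mp hωpsd.trace_nonneg).2]⟩
    exact Or.inr (hωpsd.trace_eq_zero_iff.mp (htrace_nonpos.antisymm hωpsd.trace_nonneg))
  · exact Or.inl (hω hzero)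

end Integral

theorem stmt7_general {q : ℕ} {Ω : Type*} [MeasurableSpace Ω]
    (τ : Measure Ω)
    (d : Ω → Matrix (Fin q) (Fin q) ℂ)
    (hdpsd : ∀ ω, (d ω).PosSemidef)
    (hdint : ∀ j k, Integrable (fun ω => d ω j k) τ)
    (f : Ω → ℂ)
    (hfint : ∀ j k, Integrable (fun ω => f ω * d ω j k) τ)
    -- `f` takes values in `(0,∞)` almost everywhere with respect to the trace measure of `σ`
    (hfpos : ∀ᵐ ω ∂(τ.withDensity fun ω => ENNReal.ofReal ((d ω).trace.re)),
      (f ω).im = 0 ∧ 0 < (f ω).re) :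
    LinearMap.range (Matrix.of fun j k => ∫ ω, f ω * d ω j k ∂τ).mulVecLin =
      LinearMap.range (Matrix.of fun j k => ∫ ω, d ω j k ∂τ : Matrix (Fin q) (Fin q) ℂ).mulVecLin
    ∧ LinearMap.ker (Matrix.of fun j k => ∫ ω, f ω * d ω j k ∂τ).mulVecLin =
      LinearMap.ker (Matrix.of fun j k => ∫ ω, d ω j k ∂τ : Matrix (Fin q) (Fin q) ℂ).mulVecLin := by
  have hdpsd_ae : ∀ᵐ ω ∂τ, (d ω).PosSemidef := ae_of_all _ hdpsd
  have hf_pos_or_d_zero := ae_or_eq_zero_of_ae_withDensity_trace hdint hdpsd_ae hfpos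
  have hfdpsd : ∀ᵐ ω ∂τ, (f ω • d ω).PosSemidef := by
    filter_upwards [hf_pos_or_d_zero] with ω hω
    rcases hω with ⟨him, hre⟩ | hzero
    · exact (hdpsd ω).smul (Complex.nonneg_iff.mpr ⟨hre.le, him.symm⟩)
    · simp [hzero, PosSemidef.zero]
  have hker : LinearMap.ker (of fun j k => ∫ ω, (f ω • d ω) j k ∂τ).mulVecLin =
      LinearMap.ker (of fun j k => ∫ ω, d ω j k ∂τ).mulVecLin := by
    ext x
    simp only [LinearMap.mem_ker, mulVecLin_apply]
    rw [mulVec_integral_eq_zero_iff (m := fun ω => f ω • d ω) hfint hfdpsd,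
      mulVec_integral_eq_zero_iff hdint hdpsd_ae]
    refine eventually_congr ?_
    filter_upwards [hf_pos_or_d_zero] with ω hω
    rw [smul_mulVec, dotProduct_smul, smul_eq_mul, mul_eq_zero]
    rcases hω with ⟨-, hre⟩ | hzero
    · have hf : f ω ≠ 0 := fun h => by simp [h] at hre
      simp [hf]
    · simp [hzero]
  exact ⟨(posSemidef_integral hfint hfdpsd).isHermitian.range_mulVecLin_eq_of_ker_eq
    (posSemidef_integral hdint hdpsd_ae).isHermitian hker, hker⟩

theorem stmt7 {q : ℕ} {Ω : Type*} [MeasurableSpace Ω]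
    (τ : Measure Ω) [IsFiniteMeasure τ]
    (d : Ω → Matrix (Fin q) (Fin q) ℂ)
    (hdmeas : ∀ j k : Fin q, Measurable fun ω => d ω j k)
    (hdpsd : ∀ ω, (d ω).PosSemidef)
    (hdint : ∀ j k, Integrable (fun ω => d ω j k) τ)
    (f : Ω → ℂ) (hfmeas : Measurable f)
    (hfint : ∀ j k, Integrable (fun ω => f ω * d ω j k) τ)
    -- `f` takes values in `(0,∞)` almost everywhere with respect to the trace measure of `σ`
    (hfpos : ∀ᵐ ω ∂(τ.withDensity fun ω => ENNReal.ofReal ((d ω).trace.re)),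
      (f ω).im = 0 ∧ 0 < (f ω).re) :
    LinearMap.range (Matrix.of fun j k => ∫ ω, f ω * d ω j k ∂τ).mulVecLin =
      LinearMap.range (Matrix.of fun j k => ∫ ω, d ω j k ∂τ : Matrix (Fin q) (Fin q) ℂ).mulVecLin
    ∧ LinearMap.ker (Matrix.of fun j k => ∫ ω, f ω * d ω j k ∂τ).mulVecLin =
      LinearMap.ker (Matrix.of fun j k => ∫ ω, d ω j k ∂τ : Matrix (Fin q) (Fin q) ℂ).mulVecLin :=
  stmt7_general τ d hdpsd hdint f hfint hfpos
end

section
/- Let A be a complex q×q EP matrix, i.e., the column space of A* equals the column space of A. Then Im(A⁺) = -A⁺ (Im A) (A⁺)*, where A⁺ denotes the Moore-Penrose inverse and Im M = (M - M*)/(2i). -/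
open Matrix Complex MeasureTheory Filter
open scoped ComplexOrder

private lemma eq_of_mulVec_eq {q : ℕ} {M N : Matrix (Fin q) (Fin q) ℂ}
    (h : ∀ x, M.mulVec x = N.mulVec x) : M = N := by
  ext i j
  have := congrFun (h (Pi.single j 1)) i
  simpa [Matrix.mulVec_single] using this

theorem stmt9 {q : ℕ} (A B : Matrix (Fin q) (Fin q) ℂ)
    -- `A` is an EP matrix: the column space of `Aᴴ` equals the column space of `A`
    (hEP : LinearMap.range Aᴴ.mulVecLin = LinearMap.range A.mulVecLin)
    -- `B` is the Moore-Penrose inverse of `A`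
    (h1 : A * B * A = A) (h2 : B * A * B = B)
    (h3 : (A * B)ᴴ = A * B) (h4 : (B * A)ᴴ = B * A) :
    mIm B = -(B * mIm A * Bᴴ) := by
  have hrAB : LinearMap.range (A*B).mulVecLin = LinearMap.range A.mulVecLin := by
    apply le_antisymm
    · rintro _ ⟨x, rfl⟩
      exact ⟨B.mulVec x, by simp [Matrix.mulVecLin_apply, Matrix.mulVec_mulVec]⟩
    · rintro _ ⟨x, rfl⟩
      refine ⟨A.mulVec x, ?_⟩
      simp only [Matrix.mulVecLin_apply, Matrix.mulVec_mulVec, h1]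
  have hBAAH : (B * A) * Aᴴ = Aᴴ := by
    have h1' : A * (B * A) = A := by rw [← Matrix.mul_assoc, h1]
    have := congrArg Matrix.conjTranspose h1'
    rwa [Matrix.conjTranspose_mul, h4] at this
  have hrBA : LinearMap.range (B*A).mulVecLin = LinearMap.range Aᴴ.mulVecLin := by
    apply le_antisymm
    · rintro _ ⟨x, rfl⟩
      refine ⟨Bᴴ.mulVec x, ?_⟩
      simp only [Matrix.mulVecLin_apply, Matrix.mulVec_mulVec]
      rw [show Aᴴ * Bᴴ = B * A by rw [← Matrix.conjTranspose_mul, h4]]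
    · rintro _ ⟨x, rfl⟩
      refine ⟨Aᴴ.mulVec x, ?_⟩
      simp only [Matrix.mulVecLin_apply, Matrix.mulVec_mulVec, hBAAH]
  have hrange : LinearMap.range (B*A).mulVecLin = LinearMap.range (A*B).mulVecLin := by
    rw [hrBA, hrAB, hEP]
  have hPP : (A*B) * (A*B) = A*B := by rw [← Matrix.mul_assoc, h1]
  have hQQ : (B*A) * (B*A) = B*A := by rw [← Matrix.mul_assoc, h2]
  -- Q * P = P
  have hQP : (B*A) * (A*B) = A*B := by
    apply eq_of_mulVec_eq
    intro x
    rw [← Matrix.mulVec_mulVec]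
    have hmem : (A*B).mulVec x ∈ LinearMap.range (B*A).mulVecLin := by
      rw [hrange]; exact ⟨x, rfl⟩
    obtain ⟨y, hy⟩ := hmem
    simp only [Matrix.mulVecLin_apply] at hy
    rw [← hy, Matrix.mulVec_mulVec, hQQ]
  -- P * Q = Q
  have hPQ : (A*B) * (B*A) = B*A := by
    apply eq_of_mulVec_eq
    intro x
    rw [← Matrix.mulVec_mulVec]
    have hmem : (B*A).mulVec x ∈ LinearMap.range (A*B).mulVecLin := by
      rw [← hrange]; exact ⟨x, rfl⟩
    obtain ⟨y, hy⟩ := hmem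
    simp only [Matrix.mulVecLin_apply] at hy
    rw [← hy, Matrix.mulVec_mulVec, hPP]
  -- commute
  have hcomm : A * B = B * A := by
    have := congrArg Matrix.conjTranspose hPQ
    rw [Matrix.conjTranspose_mul, h3, h4] at this
    -- this : (B*A) * (A*B) = B*A
    rw [hQP] at this
    exact this
  -- key identities
  have e1 : B * A * Bᴴ = Bᴴ := by
    have : Bᴴ = (A*B) * Bᴴ := by
      conv_lhs => rw [← h2]
      rw [Matrix.mul_assoc, Matrix.conjTranspose_mul, h3]
    rw [← hcomm]
    exact this.symm
  have e2 : B * Aᴴ * Bᴴ = B := by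
    rw [Matrix.mul_assoc, ← Matrix.conjTranspose_mul, h4, ← Matrix.mul_assoc]
    calc B * B * A = B * (B * A) := by rw [Matrix.mul_assoc]
    _ = B * (A * B) := by rw [hcomm]
    _ = B := by rw [← Matrix.mul_assoc, h2]
  -- finish
  unfold mIm
  rw [Matrix.mul_smul, Matrix.smul_mul, ← smul_neg]
  congr 1
  rw [Matrix.mul_sub, Matrix.sub_mul, e1, e2, neg_sub]
end

section
/- Let α ∈ ℝ, let F : ℂ \ [α,∞) → ℂ^{q×q} be holomorphic, and define F⁰(z) := (z - α)·F(z). Suppose Im F(w) and Im F⁰(w) are positive semidefinite for every w in the open upper half-plane. Then Re F(x) is positive semidefinite for every real x < α. -/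
open Matrix Complex MeasureTheory Filter
open scoped ComplexOrder

/-! For `w` in the upper half-plane, `Im((w - α) F(w)) = (Re w - α) Im F(w) + (Im w) Re F(w)`,
so when `Re w ≤ α` the matrix `Re F(w)` is a nonnegative combination of `Im((w - α) F(w))` and
`Im F(w)`. Letting `w = x + it` tend to a real `x < α`, where `F` is continuous, gives the claim
because the positive semidefinite cone is closed. -/

open Topology

lemma mIm_smul {q : ℕ} (c : ℂ) (M : Matrix (Fin q) (Fin q) ℂ) :
    mIm (c • M) = c.re • mIm M + c.im • mRe M := by
  ext i j
  simp only [mRe, mIm, Matrix.add_apply, Matrix.smul_apply, Matrix.sub_apply,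
    Matrix.conjTranspose_apply, smul_eq_mul, Complex.real_smul, RCLike.star_def]
  conv_lhs => rw [← Complex.re_add_im c]
  simp only [map_add, map_mul, Complex.conj_ofReal, Complex.conj_I]
  field_simp
  ring_nf

lemma continuous_mRe {q : ℕ} : Continuous (mRe : Matrix (Fin q) (Fin q) ℂ → _) := by
  unfold mRe; fun_prop

lemma Matrix.isClosed_setOf_posSemidef {n 𝕜 : Type*} [Fintype n] [RCLike 𝕜] :
    IsClosed {M : Matrix n n 𝕜 | M.PosSemidef} := by
  simp only [Matrix.posSemidef_iff_dotProduct_mulVec, Set.ofPred_and, Set.ofPred_forall]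
  refine (isClosed_eq (by fun_prop) continuous_id).inter (isClosed_iInter fun v => ?_)
  exact isClosed_le continuous_const (by fun_prop)

lemma posSemidef_mRe_of_posSemidef_mIm {q : ℕ} {M : Matrix (Fin q) (Fin q) ℂ} {c : ℂ}
    (hc_im : 0 < c.im) (hc_re : c.re ≤ 0) (hM : (mIm M).PosSemidef)
    (hcM : (mIm (c • M)).PosSemidef) : (mRe M).PosSemidef := by
  have hRe : mRe M = c.im⁻¹ • (mIm (c • M) + (-c.re) • mIm M) := by
    rw [mIm_smul]
    match_scalars <;> simp [hc_im.ne']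
  rw [hRe]
  exact ((hcM.add (hM.smul (neg_nonneg.2 hc_re))).smul (inv_nonneg.2 hc_im.le))

theorem stmt15 {q : ℕ} (α : ℝ) (F : ℂ → Matrix (Fin q) (Fin q) ℂ)
    (hholo : ∀ j k : Fin q,
      DifferentiableOn ℂ (fun z => F z j k) {z : ℂ | ∀ t : ℝ, α ≤ t → z ≠ (t : ℂ)})
    (hup : ∀ w : ℂ, 0 < w.im → (mIm (F w)).PosSemidef)
    (hup' : ∀ w : ℂ, 0 < w.im → (mIm ((w - (α : ℂ)) • F w)).PosSemidef) :
    ∀ x : ℝ, x < α → (mRe (F (x : ℂ))).PosSemidef := by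
  intro x hx
  have hdomain : {z : ℂ | ∀ t : ℝ, α ≤ t → z ≠ (t : ℂ)} ∈ 𝓝 (x : ℂ) := by
    refine Filter.mem_of_superset ((isOpen_lt continuous_re continuous_const).mem_nhds
      (by simpa using hx)) fun z hz t ht hzt => ?_
    simp only [Set.mem_ofPred_eq, hzt, ofReal_re] at hz
    linarith
  have hF : ContinuousAt F x := continuousAt_pi.2 fun j => continuousAt_pi.2 fun k =>
    (hholo j k).continuousOn.continuousAt hdomain
  have hpath : Tendsto (fun t : ℝ => (x : ℂ) + t * I) (𝓝[>] 0) (𝓝 (x : ℂ)) := by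
    have hcont : Continuous fun t : ℝ => (x : ℂ) + t * I := by fun_prop
    simpa using (hcont.tendsto 0).mono_left nhdsWithin_le_nhds
  refine isClosed_setOf_posSemidef.mem_of_tendsto
    ((continuous_mRe.tendsto _).comp (hF.tendsto.comp hpath)) ?_
  filter_upwards [self_mem_nhdsWithin] with t (ht : 0 < t)
  have hw : 0 < ((x : ℂ) + t * I).im := by simpa using ht
  exact posSemidef_mRe_of_posSemidef_mIm (by simpa using ht) (by simpa using hx.le) (hup _ hw)
    (hup' _ hw)
end

section
/- Let α ∈ ℝ, γ a positive semidefinite complex q×q matrix, and μ a finite positive semidefinite q×q matrix measure on [α,∞). Define F(z) = γ + ∫_{[α,∞)} (1+t-α)/(t-z) dμ(t) and F⁰(z) := (z-α) F(z) for z ∈ ℂ \ [α,∞). Then Im F⁰(z) = (Im z)·(γ + ∫_{[α,∞)} (1+t-α)(t-α)/|t-z|² dμ(t)) for all z in the domain; consequently (1/Im z)·Im F⁰(z) is positive semidefinite for all non-real z, and F⁰(x) is Hermitian for all real x < α. -/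
/-!
Write `F z = γ + ∫ K_z dμ` with `K_z t = (1 + t - α) / (t - z)`. Against a Hermitian matrix
density, taking imaginary parts commutes with integration, and
`Im ((z - α) K_z t) = Im z · (1 + t - α)(t - α) / |t - z|²`; this is the formula for `Im F⁰`.
That weight is nonnegative on `[α, ∞)`, so after dividing by `Im z` what is left is `γ` plus the
integral of a nonnegative weight against a positive semidefinite density. For real `z = x < α`
the formula says `Im F⁰(x) = 0`, i.e. `F⁰(x)` is Hermitian. All integrals exist because `z`
has positive distance from `[α, ∞)`, which bounds both kernels there.
-/

open Matrix Complex MeasureTheory Filter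
open scoped ComplexOrder

open scoped ComplexConjugate

section DensityIntegral

variable {X n : Type*} [MeasurableSpace X] (τ : Measure X) (d : X → Matrix n n ℂ)

/-- `∫ f dμ` for the matrix measure `μ = d • τ`. -/
noncomputable def densityIntegral (f : X → ℂ) : Matrix n n ℂ :=
  Matrix.of fun j k => ∫ t, f t * d t j k ∂τ

variable {τ d}

lemma densityIntegral_const_mul (c : ℂ) (f : X → ℂ) :
    densityIntegral τ d (fun t => c * f t) = c • densityIntegral τ d f := by
  ext j k
  simp only [densityIntegral, of_apply, Matrix.smul_apply, smul_eq_mul, mul_assoc,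
    integral_const_mul]

lemma densityIntegral_sub {f g : X → ℂ} (hf : ∀ j k, Integrable (fun t => f t * d t j k) τ)
    (hg : ∀ j k, Integrable (fun t => g t * d t j k) τ) :
    densityIntegral τ d (f - g) = densityIntegral τ d f - densityIntegral τ d g := by
  ext j k
  simp only [densityIntegral, of_apply, Matrix.sub_apply, Pi.sub_apply, sub_mul,
    integral_sub (hf j k) (hg j k)]

lemma conjTranspose_densityIntegral (hd : ∀ t, (d t).IsHermitian) (f : X → ℂ) :
    (densityIntegral τ d f)ᴴ = densityIntegral τ d (fun t => conj (f t)) := by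
  ext j k
  simp only [densityIntegral, conjTranspose_apply, of_apply, star_def, ← integral_conj, map_mul]
  congr with t
  rw [← star_def, (hd t).apply]

lemma integrable_conj_mul_entry (hd : ∀ t, (d t).IsHermitian) {f : X → ℂ}
    (hf : ∀ j k, Integrable (fun t => f t * d t j k) τ) (j k : n) :
    Integrable (fun t => conj (f t) * d t j k) τ := by
  convert (Complex.conjCLE : ℂ →L[ℝ] ℂ).integrable_comp (hf k j) using 2 with t
  simp [← (hd t).apply j k]

lemma dotProduct_mulVec_densityIntegral [Fintype n] {f : X → ℂ}
    (hf : ∀ j k, Integrable (fun t => f t * d t j k) τ) (x : n → ℂ) :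
    star x ⬝ᵥ (densityIntegral τ d f *ᵥ x) = ∫ t, f t * (star x ⬝ᵥ (d t *ᵥ x)) ∂τ := by
  have hint : ∀ i j, Integrable (fun t => f t * (star x i * (d t i j * x j))) τ := fun i j => by
    convert ((hf i j).mul_const (x j)).const_mul (star x i) using 2 with t
    ring
  simp only [densityIntegral, dotProduct, mulVec, of_apply, Finset.mul_sum]
  rw [integral_finsetSum _ fun i _ => integrable_finsetSum _ fun j _ => hint i j]
  refine Finset.sum_congr rfl fun i _ => ?_
  rw [integral_finsetSum _ fun j _ => hint i j]
  refine Finset.sum_congr rfl fun j _ => ?_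
  rw [← integral_mul_const, ← integral_const_mul]
  congr 1 with t
  ring

lemma posSemidef_densityIntegral [Fintype n] (hd : ∀ t, (d t).PosSemidef) {w : X → ℝ}
    (hw : ∀ᵐ t ∂τ, 0 ≤ w t) (hint : ∀ j k, Integrable (fun t => (w t : ℂ) * d t j k) τ) :
    (densityIntegral τ d (fun t => w t)).PosSemidef := by
  refine posSemidef_iff_dotProduct_mulVec.2 ⟨?_, fun x => ?_⟩
  · rw [IsHermitian, conjTranspose_densityIntegral fun t => (hd t).1]
    simp only [conj_ofReal]
  · rw [dotProduct_mulVec_densityIntegral hint]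
    refine integral_nonneg_of_ae (hw.mono fun t ht => ?_)
    exact mul_nonneg (by exact_mod_cast ht) ((hd t).dotProduct_mulVec_nonneg x)

end DensityIntegral

section MatrixImaginaryPart

variable {q : ℕ}

lemma mIm_add (M N : Matrix (Fin q) (Fin q) ℂ) : mIm (M + N) = mIm M + mIm N := by
  unfold mIm
  rw [conjTranspose_add, ← smul_add]
  congr 1
  abel

lemma mIm_smul_of_isHermitian {M : Matrix (Fin q) (Fin q) ℂ} (hM : M.IsHermitian) (a : ℂ) :
    mIm (a • M) = (a.im : ℂ) • M := by
  unfold mIm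
  rw [conjTranspose_smul, hM.eq, ← sub_smul, smul_smul, star_def, sub_conj]
  congr 1
  push_cast
  field_simp

lemma mIm_eq_zero_iff {M : Matrix (Fin q) (Fin q) ℂ} : mIm M = 0 ↔ M.IsHermitian := by
  unfold mIm
  rw [smul_eq_zero, sub_eq_zero, IsHermitian, eq_comm (a := M)]
  simp [I_ne_zero]

lemma mIm_densityIntegral {X : Type*} [MeasurableSpace X] {τ : Measure X}
    {d : X → Matrix (Fin q) (Fin q) ℂ} (hd : ∀ t, (d t).IsHermitian) {f : X → ℂ}
    (hf : ∀ j k, Integrable (fun t => f t * d t j k) τ) :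
    mIm (densityIntegral τ d f) = densityIntegral τ d (fun t => ((f t).im : ℂ)) := by
  have hsub : (f - fun t => conj (f t)) = fun t => (2 * I) * ((f t).im : ℂ) := by
    ext t
    rw [Pi.sub_apply, sub_conj]
    push_cast
    ring
  unfold mIm
  rw [conjTranspose_densityIntegral hd,
    ← densityIntegral_sub hf (integrable_conj_mul_entry hd hf), hsub,
    densityIntegral_const_mul, smul_smul, inv_mul_cancel₀ (by simp [I_ne_zero]), one_smul]

end MatrixImaginaryPart

section StieltjesKernel

variable {α δ : ℝ} {z : ℂ} {t : ℝ}

noncomputable def stieltjesKernel (α : ℝ) (z : ℂ) (t : ℝ) : ℂ :=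
  ((1 + t - α : ℝ) : ℂ) / ((t : ℂ) - z)

noncomputable def stieltjesImKernel (α : ℝ) (z : ℂ) (t : ℝ) : ℝ :=
  (1 + t - α) * (t - α) / ‖(t : ℂ) - z‖ ^ 2

lemma im_sub_mul_stieltjesKernel :
    ((z - α) * stieltjesKernel α z t).im = z.im * stieltjesImKernel α z t := by
  rw [stieltjesKernel, stieltjesImKernel, mul_div_left_comm, im_ofReal_mul, div_im,
    ← normSq_eq_norm_sq]
  simp only [sub_re, sub_im, ofReal_re, ofReal_im]
  ring

lemma exists_pos_le_norm_ofReal_sub (hz : ∀ t : ℝ, α ≤ t → z ≠ t) :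
    ∃ δ > 0, ∀ t : ℝ, α ≤ t → δ ≤ ‖(t : ℂ) - z‖ := by
  set S : Set ℂ := (↑) '' Set.Ici α
  have hS : IsClosed S := isometry_ofReal.isClosedEmbedding.isClosedMap _ isClosed_Ici
  have hzS : z ∉ S := by
    rintro ⟨t, ht, rfl⟩
    exact hz t ht rfl
  refine ⟨Metric.infDist z S, (hS.notMem_iff_infDist_pos ⟨α, α, Set.self_mem_Ici, rfl⟩).1 hzS,
    fun t ht => ?_⟩
  rw [← dist_eq_norm, dist_comm]
  exact Metric.infDist_le_dist_of_mem ⟨t, ht, rfl⟩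

lemma norm_stieltjesKernel_le (hδ : 0 < δ) (htz : δ ≤ ‖(t : ℂ) - z‖) :
    ‖stieltjesKernel α z t‖ ≤ 1 + ‖1 + z - α‖ / δ := by
  have htz₀ : (t : ℂ) - z ≠ 0 := norm_pos_iff.1 (hδ.trans_le htz)
  have hK : stieltjesKernel α z t = 1 + (1 + z - α) / ((t : ℂ) - z) := by
    rw [stieltjesKernel]
    field_simp
    push_cast
    ring
  calc ‖stieltjesKernel α z t‖ ≤ 1 + ‖1 + z - α‖ / ‖(t : ℂ) - z‖ := by
        rw [hK, ← norm_div, ← norm_one (α := ℂ)]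
        exact norm_add_le _ _
    _ ≤ 1 + ‖1 + z - α‖ / δ := by gcongr

lemma stieltjesImKernel_nonneg (ht : α ≤ t) : 0 ≤ stieltjesImKernel α z t :=
  div_nonneg (mul_nonneg (by linarith) (by linarith)) (sq_nonneg _)

lemma stieltjesImKernel_le_norm_sq (ht : α ≤ t) :
    stieltjesImKernel α z t ≤ ‖stieltjesKernel α z t‖ ^ 2 := by
  rw [stieltjesKernel, stieltjesImKernel, norm_div, norm_real, Real.norm_of_nonneg (by linarith),
    div_pow]
  exact div_le_div_of_nonneg_right (by nlinarith) (sq_nonneg _)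

end StieltjesKernel

section StieltjesIntegral

variable {q : ℕ} {α : ℝ} {z : ℂ} {τ : Measure ℝ} {d : ℝ → Matrix (Fin q) (Fin q) ℂ}

lemma integrable_stieltjesKernel_mul (hτ : ∀ᵐ t ∂τ, α ≤ t)
    (hd : ∀ j k, Integrable (fun t => d t j k) τ) (hz : ∀ t : ℝ, α ≤ t → z ≠ t) (j k : Fin q) :
    Integrable (fun t => stieltjesKernel α z t * d t j k) τ := by
  obtain ⟨δ, hδ, hδle⟩ := exists_pos_le_norm_ofReal_sub hz
  have hK : Measurable (stieltjesKernel α z) := by unfold stieltjesKernel; fun_prop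
  exact (hd j k).bdd_mul hK.aestronglyMeasurable
    (hτ.mono fun t ht => norm_stieltjesKernel_le hδ (hδle t ht))

lemma integrable_stieltjesImKernel_mul (hτ : ∀ᵐ t ∂τ, α ≤ t)
    (hd : ∀ j k, Integrable (fun t => d t j k) τ) (hz : ∀ t : ℝ, α ≤ t → z ≠ t) (j k : Fin q) :
    Integrable (fun t => (stieltjesImKernel α z t : ℂ) * d t j k) τ := by
  obtain ⟨δ, hδ, hδle⟩ := exists_pos_le_norm_ofReal_sub hz
  have hP : Measurable fun t => (stieltjesImKernel α z t : ℂ) := by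
    unfold stieltjesImKernel; fun_prop
  refine (hd j k).bdd_mul hP.aestronglyMeasurable
    (c := (1 + ‖1 + z - α‖ / δ) ^ 2) (hτ.mono fun t ht => ?_)
  rw [norm_real, Real.norm_of_nonneg (stieltjesImKernel_nonneg ht)]
  exact (stieltjesImKernel_le_norm_sq ht).trans
    (pow_le_pow_left₀ (norm_nonneg _) (norm_stieltjesKernel_le hδ (hδle t ht)) 2)

lemma mIm_sub_smul_add_densityIntegral_stieltjesKernel {γ : Matrix (Fin q) (Fin q) ℂ}
    (hγ : γ.IsHermitian) (hd : ∀ t, (d t).IsHermitian)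
    (hK : ∀ j k, Integrable (fun t => stieltjesKernel α z t * d t j k) τ) :
    mIm ((z - α) • (γ + densityIntegral τ d (stieltjesKernel α z))) =
      (z.im : ℂ) • (γ + densityIntegral τ d (fun t => (stieltjesImKernel α z t : ℂ))) := by
  have hK' : ∀ j k, Integrable (fun t => (z - α) * stieltjesKernel α z t * d t j k) τ :=
    fun j k => by simpa only [mul_assoc] using (hK j k).const_mul (z - α)
  rw [smul_add, mIm_add, mIm_smul_of_isHermitian hγ, ← densityIntegral_const_mul,
    mIm_densityIntegral hd hK']
  simp only [im_sub_mul_stieltjesKernel, sub_im, ofReal_im, sub_zero, ofReal_mul,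
    densityIntegral_const_mul, smul_add]

end StieltjesIntegral

theorem stmt16_general {q : ℕ} (α : ℝ) (γ : Matrix (Fin q) (Fin q) ℂ) (hγ : γ.PosSemidef)
    (τ : Measure ℝ) (hτ : τ (Set.Iio α) = 0)
    (d : ℝ → Matrix (Fin q) (Fin q) ℂ)
    (hdpsd : ∀ t, (d t).PosSemidef)
    (hdint : ∀ j k, Integrable (fun t => d t j k) τ)
    (F : ℂ → Matrix (Fin q) (Fin q) ℂ)
    (hF : ∀ z : ℂ, (∀ t : ℝ, α ≤ t → z ≠ (t : ℂ)) →
      F z = γ + Matrix.of fun j k =>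
        ∫ t, ((1 + t - α : ℝ) : ℂ) / ((t : ℂ) - z) * d t j k ∂τ) :
    (∀ z : ℂ, (∀ t : ℝ, α ≤ t → z ≠ (t : ℂ)) →
      mIm ((z - (α : ℂ)) • F z) = ((z.im : ℝ) : ℂ) •
        (γ + Matrix.of fun j k =>
          ∫ t, (((1 + t - α) * (t - α) / ‖(t : ℂ) - z‖ ^ 2 : ℝ) : ℂ)
            * d t j k ∂τ))
    ∧ (∀ z : ℂ, z.im ≠ 0 → ((((z.im)⁻¹ : ℝ) : ℂ) • mIm ((z - (α : ℂ)) • F z)).PosSemidef)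
    ∧ (∀ x : ℝ, x < α → (((x : ℂ) - (α : ℂ)) • F (x : ℂ)).IsHermitian) := by
  have hsupp : ∀ᵐ t ∂τ, α ≤ t :=
    (measure_eq_zero_iff_ae_notMem.1 hτ).mono fun _ h => not_lt.1 h
  have hIm : ∀ z : ℂ, (∀ t : ℝ, α ≤ t → z ≠ t) → mIm ((z - α) • F z) =
      (z.im : ℂ) • (γ + densityIntegral τ d (fun t => (stieltjesImKernel α z t : ℂ))) :=
    fun z hz => by
      rw [hF z hz]
      exact mIm_sub_smul_add_densityIntegral_stieltjesKernel hγ.1 (fun t => (hdpsd t).1)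
        (integrable_stieltjesKernel_mul hsupp hdint hz)
  refine ⟨hIm, fun z hz => ?_, fun x hx => ?_⟩
  · have hz' : ∀ t : ℝ, α ≤ t → z ≠ t := fun t _ h => hz (by simp [h])
    rw [hIm z hz', smul_smul, ← ofReal_mul, inv_mul_cancel₀ hz, ofReal_one, one_smul]
    exact hγ.add (posSemidef_densityIntegral hdpsd
      (hsupp.mono fun t => stieltjesImKernel_nonneg)
      (integrable_stieltjesImKernel_mul hsupp hdint hz'))
  · have hx' : ∀ t : ℝ, α ≤ t → (x : ℂ) ≠ t := fun t ht h => by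
      linarith [ofReal_injective h]
    rw [← mIm_eq_zero_iff, hIm x hx', ofReal_im, ofReal_zero, zero_smul]

theorem stmt16 {q : ℕ} (α : ℝ) (γ : Matrix (Fin q) (Fin q) ℂ) (hγ : γ.PosSemidef)
    (τ : Measure ℝ) [IsFiniteMeasure τ] (hτ : τ (Set.Iio α) = 0)
    (d : ℝ → Matrix (Fin q) (Fin q) ℂ)
    (hdmeas : ∀ j k : Fin q, Measurable fun t => d t j k)
    (hdpsd : ∀ t, (d t).PosSemidef)
    (hdint : ∀ j k, Integrable (fun t => d t j k) τ)
    (F : ℂ → Matrix (Fin q) (Fin q) ℂ)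
    (hF : ∀ z : ℂ, (∀ t : ℝ, α ≤ t → z ≠ (t : ℂ)) →
      F z = γ + Matrix.of fun j k =>
        ∫ t, ((1 + t - α : ℝ) : ℂ) / ((t : ℂ) - z) * d t j k ∂τ) :
    (∀ z : ℂ, (∀ t : ℝ, α ≤ t → z ≠ (t : ℂ)) →
      mIm ((z - (α : ℂ)) • F z) = ((z.im : ℝ) : ℂ) •
        (γ + Matrix.of fun j k =>
          ∫ t, (((1 + t - α) * (t - α) / ‖(t : ℂ) - z‖ ^ 2 : ℝ) : ℂ)
            * d t j k ∂τ))
    ∧ (∀ z : ℂ, z.im ≠ 0 → ((((z.im)⁻¹ : ℝ) : ℂ) • mIm ((z - (α : ℂ)) • F z)).PosSemidef)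
    ∧ (∀ x : ℝ, x < α → (((x : ℂ) - (α : ℂ)) • F (x : ℂ)).IsHermitian) :=
  stmt16_general α γ hγ τ hτ d hdpsd hdint F hF
end

section
/- Let α, β ∈ ℝ and let F : ℂ \ [α,∞) → ℂ^{q×q} be holomorphic with Im F(w) positive semidefinite on the upper half-plane, -Im F(w) positive semidefinite on the lower half-plane, and F(x) positive semidefinite for real x < α. Define G : ℂ \ (-∞, β] → ℂ^{q×q} by G(z) := -(F(α + β - z̄))*. Then G is holomorphic, Im G(w) is positive semidefinite for w in the upper half-plane, -Im G(w) is positive semidefinite for w in the lower half-plane, and -G(x) is positive semidefinite for real x > β. -/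
open Matrix Complex MeasureTheory Filter
open scoped ComplexOrder

lemma conj_conj_diffWithin {f : ℂ → ℂ} {s : Set ℂ} {w : ℂ}
    (hf : DifferentiableWithinAt ℂ f s w) :
    DifferentiableWithinAt ℂ (fun z => starRingEnd ℂ (f (starRingEnd ℂ z)))
      (starRingEnd ℂ ⁻¹' s) (starRingEnd ℂ w) := by
  obtain ⟨L, hL⟩ := hf
  have hc : HasFDerivWithinAt (fun z : ℂ => starRingEnd ℂ z)
      (Complex.conjCLE.toContinuousLinearMap) (starRingEnd ℂ ⁻¹' s) (starRingEnd ℂ w) :=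
    (Complex.conjCLE.toContinuousLinearMap.hasFDerivAt).hasFDerivWithinAt
  have hmaps : Set.MapsTo (fun z : ℂ => starRingEnd ℂ z) (starRingEnd ℂ ⁻¹' s) s :=
    fun z hz => hz
  have hL' : HasFDerivWithinAt f (L.restrictScalars ℝ) s w := hL.restrictScalars ℝ
  rw [← Complex.conj_conj w] at hL'
  have h2 := hL'.comp (starRingEnd ℂ w) (by simpa using hc) hmaps
  have hc2 : HasFDerivWithinAt (fun z : ℂ => starRingEnd ℂ z)
      (Complex.conjCLE.toContinuousLinearMap) Set.univ ((f ∘ (starRingEnd ℂ)) (starRingEnd ℂ w)) :=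
    (Complex.conjCLE.toContinuousLinearMap.hasFDerivAt).hasFDerivWithinAt
  have h3 := hc2.comp (starRingEnd ℂ w) h2 (Set.mapsTo_univ _ _)
  refine ⟨(ContinuousLinearMap.smulRight (1 : ℂ →L[ℂ] ℂ) (starRingEnd ℂ (L 1))),
    h3.of_restrictScalars ℝ ?_⟩
  ext z
  simp [Complex.conjCLE_apply]
  rw [show L (starRingEnd ℂ z) = starRingEnd ℂ z * L 1 by
    have := L.map_smul (starRingEnd ℂ z) 1; simpa [smul_eq_mul] using this]
  rw [RingHom.map_mul, Complex.conj_conj]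

theorem stmt19 {q : ℕ} (α β : ℝ) (F : ℂ → Matrix (Fin q) (Fin q) ℂ)
    (hFholo : ∀ j k : Fin q,
      DifferentiableOn ℂ (fun z => F z j k) {z : ℂ | ∀ t : ℝ, α ≤ t → z ≠ (t : ℂ)})
    (hFup : ∀ w : ℂ, 0 < w.im → (mIm (F w)).PosSemidef)
    (hFdown : ∀ w : ℂ, w.im < 0 → (-(mIm (F w))).PosSemidef)
    (hFpos : ∀ x : ℝ, x < α → (F (x : ℂ)).PosSemidef)
    (G : ℂ → Matrix (Fin q) (Fin q) ℂ)
    (hG : ∀ z : ℂ, G z = -(F ((α : ℂ) + (β : ℂ) - starRingEnd ℂ z))ᴴ) :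
    (∀ j k : Fin q,
      DifferentiableOn ℂ (fun z => G z j k) {z : ℂ | ∀ t : ℝ, t ≤ β → z ≠ (t : ℂ)})
    ∧ (∀ w : ℂ, 0 < w.im → (mIm (G w)).PosSemidef)
    ∧ (∀ w : ℂ, w.im < 0 → (-(mIm (G w))).PosSemidef)
    ∧ (∀ x : ℝ, β < x → (-(G (x : ℂ))).PosSemidef) := by
  set S : Set ℂ := {z : ℂ | ∀ t : ℝ, α ≤ t → z ≠ (t : ℂ)}
  set S' : Set ℂ := {z : ℂ | ∀ t : ℝ, t ≤ β → z ≠ (t : ℂ)}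
  -- key: mIm (G z) = mIm (F (α+β - conj z))
  have hmIm : ∀ z : ℂ, mIm (G z) = mIm (F ((α : ℂ) + (β : ℂ) - starRingEnd ℂ z)) := by
    intro z
    rw [hG z]
    set M := F ((α : ℂ) + (β : ℂ) - starRingEnd ℂ z)
    show ((2 : ℂ) * Complex.I)⁻¹ • (-Mᴴ - (-Mᴴ)ᴴ) = ((2 : ℂ) * Complex.I)⁻¹ • (M - Mᴴ)
    congr 1
    simp [sub_eq_add_neg]
    abel
  have him : ∀ z : ℂ, ((α : ℂ) + (β : ℂ) - starRingEnd ℂ z).im = z.im := by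
    intro z; simp
  refine ⟨?_, ?_, ?_, ?_⟩
  · intro j k
    have hdiff : DifferentiableOn ℂ
        (fun z => starRingEnd ℂ (F (starRingEnd ℂ z) k j)) (starRingEnd ℂ ⁻¹' S) := by
      intro z hz
      have := conj_conj_diffWithin (hFholo k j (starRingEnd ℂ z) hz)
      simpa using this
    have hA : DifferentiableOn ℂ (fun z : ℂ => (α : ℂ) + (β : ℂ) - z) S' :=
      (differentiable_const _).sub differentiable_id |>.differentiableOn
    have hmaps : Set.MapsTo (fun z : ℂ => (α : ℂ) + (β : ℂ) - z) S' (starRingEnd ℂ ⁻¹' S) := by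
      intro z hz
      intro t ht
      intro habs
      apply hz (α + β - t) (by linarith)
      have h2 : (α : ℂ) + (β : ℂ) - z = (t : ℂ) := by
        have := congrArg (starRingEnd ℂ) habs
        simpa [Complex.conj_ofReal] using this
      push_cast
      linear_combination -h2
    have hcomp := hdiff.comp hA hmaps
    have heq : ∀ z : ℂ, G z j k =
        -(starRingEnd ℂ (F (starRingEnd ℂ ((α : ℂ) + (β : ℂ) - z)) k j)) := by
      intro z
      rw [hG z]
      simp [Matrix.conjTranspose_apply, map_sub, Complex.conj_ofReal]
    have : DifferentiableOn ℂ
        (fun z => -(starRingEnd ℂ (F (starRingEnd ℂ ((α : ℂ) + (β : ℂ) - z)) k j))) S' :=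
      hcomp.neg
    exact this.congr (fun z _ => heq z)
  · intro w hw
    rw [hmIm]
    exact hFup _ (by rw [him]; exact hw)
  · intro w hw
    rw [hmIm]
    exact hFdown _ (by rw [him]; exact hw)
  · intro x hx
    rw [hG]
    have h1 : (α : ℂ) + (β : ℂ) - starRingEnd ℂ (x : ℂ) = ((α + β - x : ℝ) : ℂ) := by
      rw [Complex.conj_ofReal]; push_cast; ring
    rw [h1, neg_neg]
    have hP := hFpos (α + β - x) (by linarith)
    rw [hP.isHermitian.eq]
    exact hP
end
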